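/- arXiv:1503.02910 — 2 statements merged into one kernel-verified Lean document; each statement's English description precedes it below -/
import Mathlib

section
/- Let ρ̃ ≥ 0 and ρ̄ ≥ ρ̃ + 1. There exists η = η(ρ̄) > 0 such that for all γ with 1 < γ < 2 and γ − 1 ≤ η, and all ρ with 0 ≤ ρ ≤ 2ρ̄ satisfying |ρ − ρ̃| ≤ (γ−1)^{1/3}, one has ρ^γ − ρ̃^γ − γ ρ̃^{γ−1}(ρ − ρ̃) ≥ (γ−1)^{3/4} |ρ − ρ̃|^{3}. -/
/-!
With `C = γ(γ-1)/2 · M^(γ-2)`, the function `x ↦ x^γ - C x²` has second derivative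
`γ(γ-1)(x^(γ-2) - M^(γ-2)) ≥ 0` on `(0, M)`, so it is convex on `[0, M]` and lies above its
tangent lines; hence the Taylor remainder of `x^γ` at `ρ̃` is at least `C (ρ - ρ̃)²` for
`ρ, ρ̃ ∈ [0, 2ρ̄]`. Since `C ≥ (γ-1)/(4ρ̄)`, it remains to see that
`(γ-1)^(3/4) |ρ - ρ̃| ≤ (γ-1)^(13/12) ≤ (γ-1)/(4ρ̄)`, which holds once `γ - 1 ≤ (4ρ̄)^(-12)`.
-/

open Set

theorem ConvexOn.add_mul_sub_le_of_hasDerivAt {S : Set ℝ} {f : ℝ → ℝ} {f' x y : ℝ}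
    (hf : ConvexOn ℝ S f) (hx : x ∈ S) (hy : y ∈ S) (hf' : HasDerivAt f f' x) :
    f x + f' * (y - x) ≤ f y := by
  rcases lt_trichotomy x y with hxy | rfl | hyx
  · have h := hf.le_slope_of_hasDerivAt hx hy hxy hf'
    rw [slope_def_field, le_div_iff₀ (sub_pos.2 hxy)] at h
    linarith
  · simp
  · have h := hf.slope_le_of_hasDerivAt hy hx hyx hf'
    rw [slope_def_field, div_le_iff₀ (sub_pos.2 hyx)] at h
    linarith

theorem convexOn_rpow_sub_mul_sq {γ M : ℝ} (hγ₁ : 1 ≤ γ) (hγ₂ : γ ≤ 2) :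
    ConvexOn ℝ (Icc 0 M) fun x ↦ x ^ γ - γ * (γ - 1) / 2 * M ^ (γ - 2) * x ^ 2 := by
  set C := γ * (γ - 1) / 2 * M ^ (γ - 2)
  refine convexOn_of_hasDerivWithinAt2_nonneg (convex_Icc 0 M)
    (f' := fun x ↦ γ * x ^ (γ - 1) - C * (2 * x))
    (f'' := fun x ↦ γ * ((γ - 1) * x ^ (γ - 2)) - C * 2) ?_ ?_ ?_ ?_
  · exact ((continuous_id.rpow_const fun _ ↦ Or.inr (by linarith)).sub
      (continuous_const.mul (continuous_pow 2))).continuousOn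
  · intro x hx
    rw [interior_Icc] at hx
    have := ((Real.hasDerivAt_rpow_const (p := γ) (Or.inl hx.1.ne')).fun_sub
      ((hasDerivAt_pow 2 x).const_mul C))
    simpa using this.hasDerivWithinAt
  · intro x hx
    rw [interior_Icc] at hx
    have := (((Real.hasDerivAt_rpow_const (p := γ - 1) (Or.inl hx.1.ne')).const_mul γ).fun_sub
      (((hasDerivAt_id x).const_mul 2).const_mul C))
    simpa [show γ - 1 - 1 = γ - 2 by ring] using this.hasDerivWithinAt
  · intro x hx
    rw [interior_Icc] at hx
    have hpow : M ^ (γ - 2) ≤ x ^ (γ - 2) :=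
      Real.rpow_le_rpow_of_nonpos hx.1 hx.2.le (by linarith)
    have hγγ : 0 ≤ γ * (γ - 1) := by nlinarith
    simp only [C]
    nlinarith [mul_le_mul_of_nonneg_left hpow hγγ]

theorem mul_sq_le_rpow_sub_rpow_sub_mul {γ M a b : ℝ} (hγ₁ : 1 ≤ γ) (hγ₂ : γ ≤ 2)
    (ha : a ∈ Icc 0 M) (hb : b ∈ Icc 0 M) :
    γ * (γ - 1) / 2 * M ^ (γ - 2) * (b - a) ^ 2 ≤ b ^ γ - a ^ γ - γ * a ^ (γ - 1) * (b - a) := by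
  have hderiv := (Real.hasDerivAt_rpow_const (x := a) (Or.inr hγ₁)).sub
    ((hasDerivAt_pow 2 a).const_mul (γ * (γ - 1) / 2 * M ^ (γ - 2)))
  have := (convexOn_rpow_sub_mul_sq (M := M) hγ₁ hγ₂).add_mul_sub_le_of_hasDerivAt ha hb hderiv
  linear_combination this

theorem rpow_three_fourths_mul_le_div {ε δ K : ℝ} (hε : 0 < ε) (hK : 0 < K)
    (hδ : |δ| ≤ ε ^ ((1 : ℝ) / 3)) (hεK : ε ≤ K ^ (-12 : ℝ)) :
    ε ^ ((3 : ℝ) / 4) * |δ| ≤ ε / K := by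
  have hroot : ε ^ ((1 : ℝ) / 12) ≤ K⁻¹ := by
    calc ε ^ ((1 : ℝ) / 12) ≤ (K ^ (-12 : ℝ)) ^ ((1 : ℝ) / 12) := by gcongr
      _ = K⁻¹ := by rw [← Real.rpow_mul hK.le]; norm_num [Real.rpow_neg_one]
  calc ε ^ ((3 : ℝ) / 4) * |δ| ≤ ε ^ ((3 : ℝ) / 4) * ε ^ ((1 : ℝ) / 3) := by gcongr
    _ = ε * ε ^ ((1 : ℝ) / 12) := by
      rw [← Real.rpow_add hε, ← Real.rpow_one_add' hε.le (by norm_num)]; norm_num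
    _ ≤ ε / K := by rw [div_eq_mul_inv]; exact mul_le_mul_of_nonneg_left hroot hε.le

/-- Case 2 of the key pointwise inequality in Lemma 4.1: for `ρ̃ ≥ 0` and
`ρ̄ ≥ ρ̃ + 1` there is `η = η(ρ̄) > 0` such that for all `1 < γ < 2` with `γ − 1 ≤ η` and all
`0 ≤ ρ ≤ 2ρ̄` with `|ρ − ρ̃| ≤ (γ−1)^{1/3}`, one has
`ρ^γ − ρ̃^γ − γ ρ̃^{γ−1}(ρ − ρ̃) ≥ (γ−1)^{3/4} |ρ − ρ̃|³`. -/
theorem key_pointwise_inequality_case2 (ρt ρb : ℝ) (hρt : 0 ≤ ρt) (hρb : ρt + 1 ≤ ρb) :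
    ∃ η > (0:ℝ), ∀ γ : ℝ, 1 < γ → γ < 2 → γ - 1 ≤ η →
      ∀ ρ : ℝ, 0 ≤ ρ → ρ ≤ 2 * ρb → |ρ - ρt| ≤ (γ - 1) ^ ((1:ℝ)/3) →
        (γ - 1) ^ ((3:ℝ)/4) * |ρ - ρt| ^ 3 ≤
          ρ ^ γ - ρt ^ γ - γ * ρt ^ (γ - 1) * (ρ - ρt) := by
  have hM : 1 ≤ 2 * ρb := by linarith
  refine ⟨(4 * ρb) ^ (-12 : ℝ), Real.rpow_pos_of_pos (by linarith) _,
    fun γ hγ₁ hγ₂ hη ρ hρ₀ hρM hδ ↦ ?_⟩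
  have hcoef : (γ - 1) / (4 * ρb) ≤ γ * (γ - 1) / 2 * (2 * ρb) ^ (γ - 2) := by
    have hpow : (2 * ρb)⁻¹ ≤ (2 * ρb) ^ (γ - 2) := by
      rw [← Real.rpow_neg_one]; exact Real.rpow_le_rpow_of_exponent_le hM (by linarith)
    calc (γ - 1) / (4 * ρb) = (γ - 1) / 2 * (2 * ρb)⁻¹ := by field_simp; ring
      _ ≤ γ * (γ - 1) / 2 * (2 * ρb) ^ (γ - 2) := by gcongr; nlinarith
  have hsmall := rpow_three_fourths_mul_le_div (by linarith) (by linarith) hδ hη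
  calc (γ - 1) ^ ((3:ℝ)/4) * |ρ - ρt| ^ 3
        = (γ - 1) ^ ((3:ℝ)/4) * |ρ - ρt| * (ρ - ρt) ^ 2 := by rw [← sq_abs (ρ - ρt)]; ring
    _ ≤ (γ - 1) / (4 * ρb) * (ρ - ρt) ^ 2 := by gcongr
    _ ≤ γ * (γ - 1) / 2 * (2 * ρb) ^ (γ - 2) * (ρ - ρt) ^ 2 := by gcongr
    _ ≤ ρ ^ γ - ρt ^ γ - γ * ρt ^ (γ - 1) * (ρ - ρt) :=
      mul_sq_le_rpow_sub_rpow_sub_mul hγ₁.le hγ₂.le ⟨hρt, by linarith⟩ ⟨hρ₀, hρM⟩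
end

section
/- (Zlotnik's lemma) Let T > 0 and suppose y, b ∈ W^{1,1}(0,T) satisfy y'(t) = g(y(t)) + b'(t) on [0,T] with y(0) = y⁰, where g is continuous on ℝ with g(x) → −∞ as x → ∞. Assume there are constants N₀ ≥ 0, N₁ ≥ 0 with b(t₂) − b(t₁) ≤ N₀ + N₁(t₂ − t₁) for all 0 ≤ t₁ ≤ t₂ ≤ T, and let ζ̄ be a constant such that g(ζ) ≤ −N₁ for all ζ ≥ ζ̄. Then y(t) ≤ max{y⁰, ζ̄} + N₀ for all t ∈ [0,T]. -/
/-!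
Let `t₁` be the last time before `t` at which `y ≤ max (y 0) ζ̄`. On `(t₁, t)` we have `y > ζ̄`,
so `y' = g(y) + b' ≤ b' - N₁` there, and integrating gives
`y t - y t₁ ≤ b t - b t₁ - N₁ (t - t₁) ≤ N₀`.
-/

open Set

theorem ContinuousOn.exists_le_forall_Ioc_lt {y : ℝ → ℝ} {a t M : ℝ} (hat : a ≤ t)
    (hy : ContinuousOn y (Icc a t)) (ha : y a ≤ M) :
    ∃ t₁ ∈ Icc a t, y t₁ ≤ M ∧ ∀ x ∈ Ioc t₁ t, M < y x := by
  set S := Icc a t ∩ y ⁻¹' Iic M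
  have hS : IsClosed S := hy.preimage_isClosed_of_isClosed isClosed_Icc isClosed_Iic
  have haS : a ∈ S := ⟨left_mem_Icc.2 hat, ha⟩
  have hbdd : BddAbove S := bddAbove_Icc.mono inter_subset_left
  obtain ⟨ht₁, hyt₁⟩ := hS.csSup_mem ⟨a, haS⟩ hbdd
  refine ⟨sSup S, ht₁, hyt₁, fun x hx => lt_of_not_ge fun hyx => ?_⟩
  have hxS : x ∈ S := ⟨⟨ht₁.1.trans hx.1.le, hx.2⟩, hyx⟩
  exact (le_csSup hbdd hxS).not_gt hx.1

theorem sub_le_sub_add_mul_of_hasDerivAt_le {y b y' b' : ℝ → ℝ} {a t c : ℝ} (hat : a ≤ t)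
    (hy : ∀ s ∈ Icc a t, HasDerivAt y (y' s) s) (hb : ∀ s ∈ Icc a t, HasDerivAt b (b' s) s)
    (hle : ∀ s ∈ Ioo a t, y' s ≤ b' s + c) :
    y t - y a ≤ b t - b a + c * (t - a) := by
  have hderiv : ∀ s ∈ Icc a t, HasDerivAt (fun s => y s - b s - c * s) (y' s - b' s - c) s :=
    fun s hs => (((hy s hs).sub (hb s hs)).sub ((hasDerivAt_id s).const_mul c)).congr_deriv
      (by rw [mul_one])
  have hanti : AntitoneOn (fun s => y s - b s - c * s) (Icc a t) := by
    refine antitoneOn_of_hasDerivWithinAt_nonpos (f' := fun s => y' s - b' s - c) (convex_Icc a t)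
      (fun s hs => (hderiv s hs).continuousAt.continuousWithinAt)
      (fun s hs => ?_) (fun s hs => ?_)
    · rw [interior_Icc] at hs
      exact (hderiv s (Ioo_subset_Icc_self hs)).hasDerivWithinAt
    · rw [interior_Icc] at hs
      linarith [hle s hs]
  have := hanti (left_mem_Icc.2 hat) (right_mem_Icc.2 hat) hat
  linarith

theorem zlotnik_lemma_general (T : ℝ) (g : ℝ → ℝ)
    (y b b' : ℝ → ℝ) (N0 N1 ζb : ℝ)
    (hy : ∀ t ∈ Set.Icc (0:ℝ) T, HasDerivAt y (g (y t) + b' t) t)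
    (hb : ∀ t ∈ Set.Icc (0:ℝ) T, HasDerivAt b (b' t) t)
    (hbb : ∀ t1 t2 : ℝ, 0 ≤ t1 → t1 ≤ t2 → t2 ≤ T → b t2 - b t1 ≤ N0 + N1 * (t2 - t1))
    (hζ : ∀ ζ : ℝ, ζb ≤ ζ → g ζ ≤ -N1) :
    ∀ t ∈ Set.Icc (0:ℝ) T, y t ≤ max (y 0) ζb + N0 := by
  intro t ⟨ht0, htT⟩
  have hsub : Icc 0 t ⊆ Icc 0 T := Icc_subset_Icc_right htT
  have hcont : ContinuousOn y (Icc 0 t) :=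
    fun s hs => (hy s (hsub hs)).continuousAt.continuousWithinAt
  obtain ⟨t₁, ⟨ht₁0, ht₁t⟩, hyt₁, habove⟩ := hcont.exists_le_forall_Ioc_lt ht0 (le_max_left _ ζb)
  have hsub₁ : Icc t₁ t ⊆ Icc 0 T := (Icc_subset_Icc_left ht₁0).trans hsub
  have hrise : y t - y t₁ ≤ b t - b t₁ + -N1 * (t - t₁) := by
    refine sub_le_sub_add_mul_of_hasDerivAt_le ht₁t (fun s hs => hy s (hsub₁ hs))
      (fun s hs => hb s (hsub₁ hs)) (fun s hs => ?_)
    have := hζ (y s) ((le_max_right _ _).trans (habove s (Ioo_subset_Ioc_self hs)).le)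
    linarith
  linarith [hbb t₁ t ht₁0 ht₁t htT]

/-- Zlotnik's lemma: if `y' = g(y) + b'` on `[0,T]`, `g` is continuous with
`g(x) → −∞` as `x → ∞`, `b(t₂) − b(t₁) ≤ N₀ + N₁(t₂ − t₁)` for `0 ≤ t₁ ≤ t₂ ≤ T`, and
`g(ζ) ≤ −N₁` for all `ζ ≥ ζ̄`, then `y(t) ≤ max{y(0), ζ̄} + N₀` on `[0,T]`. -/
theorem zlotnik_lemma (T : ℝ) (hT : 0 < T) (g : ℝ → ℝ) (hg : Continuous g)
    (hgtop : Filter.Tendsto g Filter.atTop Filter.atBot)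
    (y b b' : ℝ → ℝ) (N0 N1 ζb : ℝ) (hN0 : 0 ≤ N0) (hN1 : 0 ≤ N1)
    (hy : ∀ t ∈ Set.Icc (0:ℝ) T, HasDerivAt y (g (y t) + b' t) t)
    (hb : ∀ t ∈ Set.Icc (0:ℝ) T, HasDerivAt b (b' t) t)
    (hbb : ∀ t1 t2 : ℝ, 0 ≤ t1 → t1 ≤ t2 → t2 ≤ T → b t2 - b t1 ≤ N0 + N1 * (t2 - t1))
    (hζ : ∀ ζ : ℝ, ζb ≤ ζ → g ζ ≤ -N1) :
    ∀ t ∈ Set.Icc (0:ℝ) T, y t ≤ max (y 0) ζb + N0 :=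
  zlotnik_lemma_general T g y b b' N0 N1 ζb hy hb hbb hζ
end
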